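/- Two-sided frontier interval (proved in the derivation of Theorem 1): Let X, Y, W be square-integrable real-valued random variables on a probability space with σ(X) > 0, σ(Y) > 0, σ(W) > 0, σ(Y − W) > 0, and Cov(Y − W, W) = 0. Set v = corr(X, Y) and R = corr(Y, W), and assume R² < 1. Then corr(X, Y − W) lies in the closed interval [ v·√(1 − R²) − |R|·√(1 − v²) , v·√(1 − R²) + |R|·√(1 − v²) ]. -/

import Mathlib

open MeasureTheory

/-- Covariance of two real-valued random variables: `Cov(X,Y) = E[XY] - E[X]E[Y]`. -/
noncomputable def covRV {Ω : Type*} [MeasurableSpace Ω] (μ : Measure Ω) (X Y : Ω → ℝ) : ℝ :=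
  (∫ ω, X ω * Y ω ∂μ) - (∫ ω, X ω ∂μ) * (∫ ω, Y ω ∂μ)

/-- Variance: `Var(X) = Cov(X,X)`. -/
noncomputable def varRV {Ω : Type*} [MeasurableSpace Ω] (μ : Measure Ω) (X : Ω → ℝ) : ℝ :=
  covRV μ X X

/-- Standard deviation: `σ(X) = √Var(X)`. -/
noncomputable def sdRV {Ω : Type*} [MeasurableSpace Ω] (μ : Measure Ω) (X : Ω → ℝ) : ℝ :=
  Real.sqrt (varRV μ X)

/-- Pearson correlation: `corr(X,Y) = Cov(X,Y)/(σ(X)σ(Y))`. -/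
noncomputable def corrRV {Ω : Type*} [MeasurableSpace Ω] (μ : Measure Ω) (X Y : Ω → ℝ) : ℝ :=
  covRV μ X Y / (sdRV μ X * sdRV μ Y)

open scoped ENNReal

set_option linter.unusedSectionVars false

section Aux
variable {Ω : Type*} [MeasurableSpace Ω] {μ : Measure Ω} [IsProbabilityMeasure μ]

lemma aux_one_div_one_eq : (1:ℝ≥0∞)/1 = 1/2 + 1/2 := by
  rw [ENNReal.div_add_div_same, one_div_one, one_add_one_eq_two]
  exact (ENNReal.div_self two_ne_zero ENNReal.ofNat_ne_top).symm

lemma aux_integrable_mul2 {f g : Ω → ℝ} (hf : MemLp f 2 μ) (hg : MemLp g 2 μ) :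
    Integrable (fun ω => f ω * g ω) μ := by
  have h : MemLp (g • f) 1 μ := hf.smul hg
  have h2 : (fun ω => f ω * g ω) = g • f := by funext ω; simp [mul_comm]
  rw [h2]
  exact memLp_one_iff_integrable.mp h

lemma covRV_comm (X Y : Ω → ℝ) : covRV μ X Y = covRV μ Y X := by
  unfold covRV
  rw [mul_comm (∫ ω, X ω ∂μ)]
  congr 1
  exact integral_congr_ae (Filter.Eventually.of_forall fun ω => mul_comm _ _)

lemma aux_memcomb {g h : Ω → ℝ} (hg : MemLp g 2 μ) (hh : MemLp h 2 μ) (s t : ℝ) :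
    MemLp (fun ω => s * g ω + t * h ω) 2 μ :=
  (hg.const_mul s).add (hh.const_mul t)

lemma covRV_comb {X g h : Ω → ℝ} (hX : MemLp X 2 μ) (hg : MemLp g 2 μ) (hh : MemLp h 2 μ)
    (s t : ℝ) :
    covRV μ X (fun ω => s * g ω + t * h ω) = s * covRV μ X g + t * covRV μ X h := by
  have e1 : (∫ ω, X ω * (s * g ω + t * h ω) ∂μ)
      = s * (∫ ω, X ω * g ω ∂μ) + t * (∫ ω, X ω * h ω ∂μ) := by
    rw [← integral_const_mul, ← integral_const_mul,
      ← integral_add ((aux_integrable_mul2 hX hg).const_mul s)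
        ((aux_integrable_mul2 hX hh).const_mul t)]
    exact integral_congr_ae (Filter.Eventually.of_forall fun ω => by ring)
  have e2 : (∫ ω, (s * g ω + t * h ω) ∂μ)
      = s * (∫ ω, g ω ∂μ) + t * (∫ ω, h ω ∂μ) := by
    rw [← integral_const_mul, ← integral_const_mul,
      ← integral_add ((hg.integrable one_le_two).const_mul s)
        ((hh.integrable one_le_two).const_mul t)]
  unfold covRV
  rw [e1, e2]
  ring

lemma varRV_nonneg {X : Ω → ℝ} (hX : MemLp X 2 μ) : 0 ≤ varRV μ X := by
  have h := ProbabilityTheory.variance_eq_sub hX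
  have h2 : varRV μ X = ProbabilityTheory.variance X μ := by
    rw [h]
    unfold varRV covRV
    congr 1
    · exact integral_congr_ae (Filter.Eventually.of_forall fun ω => by simp [sq])
    · ring
  rw [h2]
  exact ProbabilityTheory.variance_nonneg X μ

lemma covRV_sq_le {X Y : Ω → ℝ} (hX : MemLp X 2 μ) (hY : MemLp Y 2 μ) :
    covRV μ X Y ^ 2 ≤ varRV μ X * varRV μ Y := by
  have key : ∀ t : ℝ, 0 ≤ varRV μ Y * (t * t) + (2 * covRV μ X Y) * t + varRV μ X := by
    intro t
    have hc : MemLp (fun ω => 1 * X ω + t * Y ω) 2 μ := aux_memcomb hX hY 1 t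
    have h0 : 0 ≤ varRV μ (fun ω => 1 * X ω + t * Y ω) := varRV_nonneg hc
    have e : varRV μ (fun ω => 1 * X ω + t * Y ω)
        = varRV μ Y * (t * t) + (2 * covRV μ X Y) * t + varRV μ X := by
      show covRV μ (fun ω => 1 * X ω + t * Y ω) (fun ω => 1 * X ω + t * Y ω) = _
      rw [covRV_comb hc hX hY 1 t,
        covRV_comm (fun ω => 1 * X ω + t * Y ω) X,
        covRV_comm (fun ω => 1 * X ω + t * Y ω) Y,
        covRV_comb hX hX hY 1 t, covRV_comb hY hX hY 1 t,
        covRV_comm Y X]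
      unfold varRV
      ring
    linarith [h0, e.symm.le]
  have hd := discrim_le_zero key
  unfold discrim at hd
  nlinarith [hd]

end Aux

lemma key_ineq (cU cW sU sW sY D : ℝ) (hsU : 0 < sU) (hsW : 0 < sW) (hsY : 0 < sY)
    (hY2 : sY^2 = sU^2 + sW^2) (hc : cU^2 + cW^2 ≤ 1)
    (hD : 0 ≤ D) (hD2 : D^2 = 1 - ((cU*sU + cW*sW)/sY)^2) :
    |cU - ((cU*sU + cW*sW)/sY) * (sU/sY)| ≤ (sW/sY) * D := by
  have hY0 : sY ≠ 0 := ne_of_gt hsY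
  have h7 : (cU*sW - cW*sU)^2 + (cU*sU + cW*sW)^2 ≤ sU^2 + sW^2 := by
    have hp : 0 ≤ (1 - (cU^2 + cW^2)) * (sU^2 + sW^2) :=
      mul_nonneg (sub_nonneg.mpr hc) (by positivity)
    nlinarith [hp]
  have hsq : (sY*D)^2 = sY^2 - (cU*sU + cW*sW)^2 := by
    rw [mul_pow, hD2]
    field_simp
  have h4 : (cU*sW - cW*sU)^2 ≤ (sY*D)^2 := by
    rw [hsq, hY2]; linarith [h7]
  have h5 : |cU*sW - cW*sU| ≤ sY * D := by
    calc |cU*sW - cW*sU| = Real.sqrt ((cU*sW - cW*sU)^2) := (Real.sqrt_sq_eq_abs _).symm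
      _ ≤ Real.sqrt ((sY*D)^2) := Real.sqrt_le_sqrt h4
      _ = sY*D := Real.sqrt_sq (by positivity)
  have heq : cU - ((cU*sU + cW*sW)/sY) * (sU/sY) = sW * (cU*sW - cW*sU) / sY^2 := by
    field_simp
    linear_combination cU * hY2
  rw [heq, abs_div, abs_mul, abs_of_pos hsW, abs_of_pos (pow_pos hsY 2),
    div_le_iff₀ (pow_pos hsY 2)]
  calc sW * |cU*sW - cW*sU| ≤ sW * (sY*D) := by nlinarith [h5, hsW.le]
    _ = sW/sY * D * sY^2 := by field_simp

lemma main_alg (a b vX vU vW : ℝ) (pX : 0 < vX) (pU : 0 < vU) (pW : 0 < vW)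
    (E4 : a^2*vW + b^2*vU ≤ vX*(vU*vW))
    (CSXY : (a+b)^2 ≤ vX*(vU+vW)) :
    a / (Real.sqrt vX * Real.sqrt vU) ∈
      Set.Icc
        ((a+b)/(Real.sqrt vX * Real.sqrt (vU+vW))
            * Real.sqrt (1 - (vW/(Real.sqrt (vU+vW) * Real.sqrt vW))^2)
          - |vW/(Real.sqrt (vU+vW) * Real.sqrt vW)|
            * Real.sqrt (1 - ((a+b)/(Real.sqrt vX * Real.sqrt (vU+vW)))^2))
        ((a+b)/(Real.sqrt vX * Real.sqrt (vU+vW))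
            * Real.sqrt (1 - (vW/(Real.sqrt (vU+vW) * Real.sqrt vW))^2)
          + |vW/(Real.sqrt (vU+vW) * Real.sqrt vW)|
            * Real.sqrt (1 - ((a+b)/(Real.sqrt vX * Real.sqrt (vU+vW)))^2)) := by
  set sX := Real.sqrt vX with hsXdef
  set sU := Real.sqrt vU with hsUdef
  set sW := Real.sqrt vW with hsWdef
  set sY := Real.sqrt (vU+vW) with hsYdef
  have sXpos : 0 < sX := Real.sqrt_pos.mpr pX
  have sUpos : 0 < sU := Real.sqrt_pos.mpr pU
  have sWpos : 0 < sW := Real.sqrt_pos.mpr pW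
  have sYpos : 0 < sY := Real.sqrt_pos.mpr (by linarith)
  have hsX2 : sX^2 = vX := Real.sq_sqrt pX.le
  have hsU2 : sU^2 = vU := Real.sq_sqrt pU.le
  have hsW2 : sW^2 = vW := Real.sq_sqrt pW.le
  have hsY2 : sY^2 = vU + vW := Real.sq_sqrt (by linarith)
  set D := Real.sqrt (1 - ((a+b)/(sX * sY))^2) with hDdef
  have hY2 : sY^2 = sU^2 + sW^2 := by rw [hsY2, hsU2, hsW2]
  have hv2 : ((a+b)/(sX*sY))^2 ≤ 1 := by
    rw [div_pow, mul_pow, hsX2, hsY2, div_le_one (by positivity)]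
    exact CSXY
  have hD : 0 ≤ D := Real.sqrt_nonneg _
  have hD2 : D^2 = 1 - ((a+b)/(sX*sY))^2 := Real.sq_sqrt (by linarith)
  have harg : ((a/(sX*sU))*sU + (b/(sX*sW))*sW)/sY = (a+b)/(sX*sY) := by
    field_simp
  have hc : (a/(sX*sU))^2 + (b/(sX*sW))^2 ≤ 1 := by
    rw [div_pow, div_pow, mul_pow, mul_pow, hsX2, hsU2, hsW2]
    rw [div_add_div _ _ (by positivity) (by positivity), div_le_one (by positivity)]
    nlinarith [mul_le_mul_of_nonneg_left E4 pX.le]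
  have hD2' : D^2 = 1 - (((a/(sX*sU))*sU + (b/(sX*sW))*sW)/sY)^2 := by
    rw [harg]; exact hD2
  have KEY := key_ineq (a/(sX*sU)) (b/(sX*sW)) sU sW sY D sUpos sWpos sYpos hY2 hc hD hD2'
  rw [harg] at KEY
  have hsqR : Real.sqrt (1 - (vW/(sY * sW))^2) = sU/sY := by
    have h1 : 1 - (vW/(sY*sW))^2 = (sU/sY)^2 := by
      rw [div_pow, div_pow, mul_pow, hsY2, hsW2, hsU2]
      field_simp
      ring
    rw [h1, Real.sqrt_sq (by positivity)]
  have habsR : |vW/(sY * sW)| = sW/sY := by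
    rw [abs_of_pos (by positivity)]
    rw [← hsW2]
    field_simp
  rw [Set.mem_Icc, hsqR, habsR]
  have hKEY := abs_le.mp KEY
  constructor <;> [linarith [hKEY.1]; linarith [hKEY.2]]


/-- **Two-sided frontier interval.** Under least-squares orthogonality `Cov(Y-W,W)=0` and
`R² < 1`, the semi-partial correlation `corr(X, Y-W)` lies in
`[v√(1-R²) - |R|√(1-v²), v√(1-R²) + |R|√(1-v²)]`. -/
theorem two_sided_frontier_interval
    {Ω : Type*} [MeasurableSpace Ω] (μ : Measure Ω) [IsProbabilityMeasure μ]
    (X Y W : Ω → ℝ)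
    (hX : MemLp X 2 μ) (hY : MemLp Y 2 μ) (hW : MemLp W 2 μ)
    (hsX : 0 < sdRV μ X) (hsY : 0 < sdRV μ Y) (hsW : 0 < sdRV μ W)
    (hsYW : 0 < sdRV μ (Y - W))
    (horth : covRV μ (Y - W) W = 0)
    (hR : (corrRV μ Y W) ^ 2 < 1) :
    corrRV μ X (Y - W) ∈
      Set.Icc
        (corrRV μ X Y * Real.sqrt (1 - (corrRV μ Y W) ^ 2)
          - |corrRV μ Y W| * Real.sqrt (1 - (corrRV μ X Y) ^ 2))
        (corrRV μ X Y * Real.sqrt (1 - (corrRV μ Y W) ^ 2)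
          + |corrRV μ Y W| * Real.sqrt (1 - (corrRV μ X Y) ^ 2)) := by
  have hUmem : MemLp (fun ω => Y ω - W ω) 2 μ := hY.sub hW
  have hU : MemLp (Y - W) 2 μ := hY.sub hW
  have hfun : (Y - W) = (fun ω => Y ω - W ω) := rfl
  have hYcomb : Y = (fun ω => 1 * (Y ω - W ω) + 1 * W ω) := funext fun ω => by ring
  -- expansion of covariances against Y
  have cY : ∀ f : Ω → ℝ, MemLp f 2 μ →
      covRV μ f Y = covRV μ f (Y - W) + covRV μ f W := by
    intro f hf
    calc covRV μ f Y = covRV μ f (fun ω => 1 * (Y ω - W ω) + 1 * W ω) := by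
          conv_lhs => rw [hYcomb]
      _ = 1 * covRV μ f (fun ω => Y ω - W ω) + 1 * covRV μ f W := covRV_comb hf hUmem hW 1 1
      _ = covRV μ f (Y - W) + covRV μ f W := by rw [← hfun]; ring
  have E1 : covRV μ X Y = covRV μ X (Y - W) + covRV μ X W := cY X hX
  have E2 : covRV μ Y W = varRV μ W := by
    rw [covRV_comm Y W, cY W hW, covRV_comm W (Y - W), horth]
    unfold varRV
    ring
  have E3 : varRV μ Y = varRV μ (Y - W) + varRV μ W := by
    show covRV μ Y Y = _
    rw [cY Y hY, covRV_comm Y (Y - W), cY (Y - W) hU, horth, E2]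
    unfold varRV
    ring
  -- positivity of variances
  have pX : 0 < varRV μ X := Real.sqrt_pos.mp hsX
  have pU : 0 < varRV μ (Y - W) := Real.sqrt_pos.mp hsYW
  have pW : 0 < varRV μ W := Real.sqrt_pos.mp hsW
  -- the combined Cauchy–Schwarz estimate E4
  set a := covRV μ X (Y - W) with hadef
  set b := covRV μ X W with hbdef
  set vX := varRV μ X with hvXdef
  set vU := varRV μ (Y - W) with hvUdef
  set vW := varRV μ W with hvWdef
  have E4 : a^2*vW + b^2*vU ≤ vX*(vU*vW) := by
    set p := a * vW with hpdef
    set q := b * vU with hqdef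
    have hZ : MemLp (fun ω => p * (Y ω - W ω) + q * W ω) 2 μ := aux_memcomb hUmem hW p q
    have cZ : ∀ f : Ω → ℝ, MemLp f 2 μ →
        covRV μ f (fun ω => p * (Y ω - W ω) + q * W ω)
          = p * covRV μ f (Y - W) + q * covRV μ f W := by
      intro f hf
      have h := covRV_comb hf hUmem hW p q
      rw [← hfun] at h
      exact h
    have covXZ : covRV μ X (fun ω => p * (Y ω - W ω) + q * W ω) = p * a + q * b := cZ X hX
    have covUZ : covRV μ (Y - W) (fun ω => p * (Y ω - W ω) + q * W ω) = p * vU := by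
      rw [cZ (Y - W) hU, horth]
      unfold vU
      unfold varRV
      ring
    have covWZ : covRV μ W (fun ω => p * (Y ω - W ω) + q * W ω) = q * vW := by
      rw [cZ W hW, covRV_comm W (Y - W), horth]
      unfold vW
      unfold varRV
      ring
    have varZ : varRV μ (fun ω => p * (Y ω - W ω) + q * W ω) = p^2 * vU + q^2 * vW := by
      show covRV μ _ _ = _
      rw [cZ _ hZ, covRV_comm _ (Y - W), covRV_comm _ W, covUZ, covWZ]
      ring
    have CS := covRV_sq_le hX hZ
    rw [covXZ, varZ, hpdef, hqdef, ← hvXdef] at CS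
    -- CS : (p*a + q*b)^2 ≤ vX * (p^2 * vU + q^2 * vW)
    have hT : 0 ≤ a^2*vW + b^2*vU := by positivity
    rcases eq_or_lt_of_le hT with h0 | hTpos
    · rw [← h0]; positivity
    · have hmul : (a^2*vW + b^2*vU) * (a^2*vW + b^2*vU) ≤ (vX*(vU*vW)) * (a^2*vW + b^2*vU) := by
        nlinarith [CS]
      exact le_of_mul_le_mul_right hmul hTpos
  have CSXY : (a + b)^2 ≤ vX * (vU + vW) := by
    have h := covRV_sq_le hX hY
    rw [E1, E3] at h
    exact h
  -- reduce the goal to the purely algebraic statement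
  simp only [corrRV, sdRV, E1, E2, E3, ← hadef, ← hbdef, ← hvXdef, ← hvUdef, ← hvWdef]
  exact main_alg a b vX vU vW pX pU pW E4 CSXY
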